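/- Multiplier transfer under TRO-equivalence: let X ⊆ C ⊆ B(H) and Y ⊆ D ⊆ B(K) where C, D are C*-algebras, and let M ⊆ B(H,K) be a TRO with X = closure(span(M* Y M)), Y = closure(span(M X M*)), C = closure(span(M* D M)), D = closure(span(M C M*)). Define M_ℓ(X) = {a ∈ C : a X ⊆ X} and M_ℓ(Y) = {b ∈ D : b Y ⊆ Y}. Then M* M_ℓ(Y) M ⊆ M_ℓ(X). -/
import Mathlib


open ContinuousLinearMap

noncomputable section

/-- Norm closure of the linear span of a set of operators. -/
def csp {E : Type*} [NormedAddCommGroup E] [NormedSpace ℂ E] (S : Set E) : Set E :=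
  closure (Submodule.span ℂ S : Set E)


/-- If a continuous linear map sends a generating set into a closed submodule,
it sends the closed span into it too. -/
lemma csp_key {E F : Type*} [NormedAddCommGroup E] [NormedSpace ℂ E]
    [NormedAddCommGroup F] [NormedSpace ℂ F]
    (S : Set E) (L : E →L[ℂ] F) (Z : Submodule ℂ F) (hZ : IsClosed (Z : Set F))
    (h : ∀ s ∈ S, L s ∈ Z) : ∀ x ∈ csp S, L x ∈ Z := by
  intro x hx
  have h1 : (Submodule.span ℂ S : Set E) ⊆ L ⁻¹' Z := by
    have : Submodule.span ℂ S ≤ Z.comap (L : E →ₗ[ℂ] F) :=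
      Submodule.span_le.mpr h
    exact fun y hy => this hy
  have h2 : IsClosed (L ⁻¹' (Z : Set F)) := hZ.preimage L.continuous
  exact closure_minimal h1 h2 hx

/-- Multiplier transfer under TRO-equivalence: if `X ⊆ C ⊆ B(H)`, `Y ⊆ D ⊆ B(K)` with
`C, D` C*-algebras and `M` a TRO implementing `X = closure span (M* Y M)`,
`Y = closure span (M X M*)`, `C = closure span (M* D M)`, `D = closure span (M C M*)`,
then `M* M_ℓ(Y) M ⊆ M_ℓ(X)`: for all `m, n ∈ M` and `b ∈ M_ℓ(Y)`, the operator
`m* b n` lies in `C` and multiplies `X` into `X`. -/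
theorem stmt16 {H K : Type*}
    [NormedAddCommGroup H] [InnerProductSpace ℂ H] [CompleteSpace H]
    [NormedAddCommGroup K] [InnerProductSpace ℂ K] [CompleteSpace K]
    (M : Submodule ℂ (H →L[ℂ] K)) (hMclosed : IsClosed (M : Set (H →L[ℂ] K)))
    (hTRO : ∀ m ∈ M, ∀ n ∈ M, ∀ l ∈ M, m ∘L (adjoint n) ∘L l ∈ M)
    (C : Submodule ℂ (H →L[ℂ] H)) (hCclosed : IsClosed (C : Set (H →L[ℂ] H)))
    (hCmul : ∀ a ∈ C, ∀ b ∈ C, a ∘L b ∈ C) (hCstar : ∀ a ∈ C, adjoint a ∈ C)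
    (D : Submodule ℂ (K →L[ℂ] K)) (hDclosed : IsClosed (D : Set (K →L[ℂ] K)))
    (hDmul : ∀ a ∈ D, ∀ b ∈ D, a ∘L b ∈ D) (hDstar : ∀ a ∈ D, adjoint a ∈ D)
    (X : Submodule ℂ (H →L[ℂ] H)) (hXclosed : IsClosed (X : Set (H →L[ℂ] H)))
    (hXC : X ≤ C)
    (Y : Submodule ℂ (K →L[ℂ] K)) (hYclosed : IsClosed (Y : Set (K →L[ℂ] K)))
    (hYD : Y ≤ D)
    (hX : (X : Set (H →L[ℂ] H)) =
      csp {T | ∃ m ∈ M, ∃ y ∈ Y, ∃ n ∈ M, T = (adjoint m) ∘L y ∘L n})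
    (hY : (Y : Set (K →L[ℂ] K)) =
      csp {T | ∃ m ∈ M, ∃ x ∈ X, ∃ n ∈ M, T = m ∘L x ∘L (adjoint n)})
    (hC : (C : Set (H →L[ℂ] H)) =
      csp {T | ∃ m ∈ M, ∃ d ∈ D, ∃ n ∈ M, T = (adjoint m) ∘L d ∘L n})
    (hD : (D : Set (K →L[ℂ] K)) =
      csp {T | ∃ m ∈ M, ∃ c ∈ C, ∃ n ∈ M, T = m ∘L c ∘L (adjoint n)}) :
    ∀ m ∈ M, ∀ n ∈ M, ∀ b ∈ D, (∀ y ∈ Y, b ∘L y ∈ Y) →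
      ((adjoint m) ∘L b ∘L n ∈ C ∧ ∀ x ∈ X, ((adjoint m) ∘L b ∘L n) ∘L x ∈ X) := by
  intro m hm n hn b hb hbY
  -- M M* Y ⊆ Y
  have hMMY : ∀ a ∈ M, ∀ c ∈ M, ∀ y ∈ Y, (a ∘L adjoint c) ∘L y ∈ Y := by
    intro a ha c hc y hy
    have hy' : y ∈ csp {T | ∃ m ∈ M, ∃ x ∈ X, ∃ n ∈ M, T = m ∘L x ∘L (adjoint n)} := by
      rw [← hY]; exact hy
    refine csp_key _ ((compL ℂ K K K) (a ∘L adjoint c)) Y hYclosed ?_ y hy'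
    rintro s ⟨m₂, hm₂, x₂, hx₂, n₂, hn₂, rfl⟩
    have hmem : ((a ∘L adjoint c ∘L m₂) ∘L x₂ ∘L (adjoint n₂)) ∈ (Y : Set (K →L[ℂ] K)) := by
      rw [hY]
      exact subset_closure (Submodule.subset_span
        ⟨a ∘L adjoint c ∘L m₂, hTRO a ha c hc m₂ hm₂, x₂, hx₂, n₂, hn₂, rfl⟩)
    exact hmem
  constructor
  · show _ ∈ (C : Set (H →L[ℂ] H))
    rw [hC]
    exact subset_closure (Submodule.subset_span ⟨m, hm, b, hb, n, hn, rfl⟩)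
  · intro x hx
    have hx' : x ∈ csp {T | ∃ m ∈ M, ∃ y ∈ Y, ∃ n ∈ M, T = (adjoint m) ∘L y ∘L n} := by
      rw [← hX]; exact hx
    refine csp_key _ ((compL ℂ H H H) ((adjoint m) ∘L b ∘L n)) X hXclosed ?_ x hx'
    rintro s ⟨m', hm', y, hy, n', hn', rfl⟩
    have hy1 : (n ∘L adjoint m') ∘L y ∈ Y := hMMY n hn m' hm' y hy
    have hy2 : b ∘L ((n ∘L adjoint m') ∘L y) ∈ Y := hbY _ hy1
    have hmem : (adjoint m) ∘L (b ∘L ((n ∘L adjoint m') ∘L y)) ∘L n' ∈ (X : Set (H →L[ℂ] H)) := by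
      rw [hX]
      exact subset_closure (Submodule.subset_span ⟨m, hm, _, hy2, n', hn', rfl⟩)
    exact hmem
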